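/- Let (W,S) be the Coxeter system of affine type D̃_{n+2} (generators s_0,…,s_{n+2}, where s_0,s_1 are both joined to s_2, s_{n+1},s_{n+2} are both joined to s_n, and s_2–s_3–⋯–s_n is a path, all bonds of order 3). Let w ∈ FC(D̃_{n+2}) with D_L(w) = {s_0, s_1}. Then w is left star irreducible. -/

import Mathlib

open CoxeterSystem

namespace CoxFC


open CoxeterSystem


variable {B : Type*} {W : Type*} [Group W] {M : CoxeterMatrix B}

/-- One commutation move: swap two adjacent commuting letters. -/
def CommStep (M : CoxeterMatrix B) (l l' : List B) : Prop :=
  ∃ (l₁ l₂ : List B) (a b : B), M a b = 2 ∧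
    l = l₁ ++ a :: b :: l₂ ∧ l' = l₁ ++ b :: a :: l₂

/-- Two words are commutation equivalent if related by a sequence of commutation moves. -/
def CommEquiv (M : CoxeterMatrix B) : List B → List B → Prop :=
  Relation.ReflTransGen (CommStep M)

/-- A fully commutative element: any two reduced expressions are commutation equivalent. -/
def IsFC (cs : CoxeterSystem M W) (w : W) : Prop :=
  ∀ l l' : List B, cs.IsReduced l → cs.IsReduced l' →
    cs.wordProd l = w → cs.wordProd l' = w → CommEquiv M l l'

/-- `m s t ≥ 3`, where a matrix entry `0` denotes `∞`. -/
def Big (M : CoxeterMatrix B) (s t : B) : Prop := 3 ≤ M s t ∨ M s t = 0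

/-- `w` is left star reducible by `s` with respect to `t`. -/
def IsLeftStarReducible (cs : CoxeterSystem M W) (s t : B) (w : W) : Prop :=
  Big M s t ∧ cs.IsLeftDescent w s ∧ cs.IsLeftDescent (cs.simple s * w) t

/-- `w` is right star reducible by `s` with respect to `t`. -/
def IsRightStarReducible (cs : CoxeterSystem M W) (s t : B) (w : W) : Prop :=
  Big M s t ∧ cs.IsRightDescent w s ∧ cs.IsRightDescent (w * cs.simple s) t

/-- A single left star reduction step from `w` to `v`. -/
def LeftStarStep (cs : CoxeterSystem M W) (w v : W) : Prop :=
  ∃ s t : B, IsLeftStarReducible cs s t w ∧ v = cs.simple s * w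

/-- A single (left or right) star reduction step from `w` to `v`. -/
def StarStep (cs : CoxeterSystem M W) (w v : W) : Prop :=
  ∃ s t : B, (IsLeftStarReducible cs s t w ∧ v = cs.simple s * w) ∨
    (IsRightStarReducible cs s t w ∧ v = w * cs.simple s)

/-- `w` admits no left star reduction. -/
def LeftStarIrreducible (cs : CoxeterSystem M W) (w : W) : Prop :=
  ∀ s t : B, ¬ IsLeftStarReducible cs s t w

/-- `w` admits no star reduction at all. -/
def StarIrreducible (cs : CoxeterSystem M W) (w : W) : Prop :=
  ∀ s t : B, ¬ IsLeftStarReducible cs s t w ∧ ¬ IsRightStarReducible cs s t w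

/-- A product of pairwise commuting generators (including the identity). -/
def IsCC (cs : CoxeterSystem M W) (w : W) : Prop :=
  ∃ l : List B, cs.IsReduced l ∧ cs.wordProd l = w ∧
    ∀ a ∈ l, ∀ b ∈ l, a ≠ b → M a b = 2

/-- The support of `w`: generators appearing in some reduced expression. -/
def Supp (cs : CoxeterSystem M W) (w : W) : Set B :=
  {a | ∃ l : List B, cs.IsReduced l ∧ cs.wordProd l = w ∧ a ∈ l}

/-- `us` is the Cartier–Foata normal form of `w`, presented as a list of words,
each a product of pairwise commuting generators. -/
def IsCFNF (cs : CoxeterSystem M W) (w : W) (us : List (List B)) : Prop :=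
  (∀ l ∈ us, l ≠ []) ∧
  cs.wordProd us.flatten = w ∧
  cs.IsReduced us.flatten ∧
  (∀ l ∈ us, ∀ a ∈ l, ∀ b ∈ l, a ≠ b → M a b = 2) ∧
  (∀ a : B, (∃ l ∈ us.head?, a ∈ l) ↔ cs.IsLeftDescent w a) ∧
  (∀ j : ℕ, j + 1 < us.length → ∀ t ∈ us.getD (j+1) [],
      ∃ s ∈ us.getD j [], Big M s t)



/-- One orientation of the edges of the Coxeter graph of type D̃_{n+2}. -/
def DHalf (n a b : ℕ) : Prop :=
  (a = 0 ∧ b = 2) ∨ (a = 1 ∧ b = 2) ∨ (2 ≤ a ∧ a ≤ n ∧ b = a + 1) ∨ (a = n ∧ b = n + 2)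

/-- Adjacency (bond of order 3) in the Coxeter graph of type D̃_{n+2}:
`s_0, s_1` are joined to `s_2`, `s_2 — s_3 — ⋯ — s_n` is a path, and
`s_{n+1}, s_{n+2}` are joined to `s_n`. -/
def DAdj (n a b : ℕ) : Prop := DHalf n a b ∨ DHalf n b a

instance (n a b : ℕ) : Decidable (DAdj n a b) := by unfold DAdj DHalf; infer_instance

lemma dAdj_symm (n a b : ℕ) : DAdj n a b ↔ DAdj n b a := or_comm

lemma dHalf_ne (n a b : ℕ) (h : DHalf n a b) : a ≠ b := by unfold DHalf at h; omega

lemma dAdj_ne (n a b : ℕ) (h : DAdj n a b) : a ≠ b := by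
  rcases h with h | h
  · exact dHalf_ne n a b h
  · exact (dHalf_ne n b a h).symm

/-- The Coxeter matrix of affine type D̃_{n+2}, with vertices `s_0, …, s_{n+2}`. -/
def DMatrix (n : ℕ) : CoxeterMatrix (Fin (n+3)) where
  M := Matrix.of fun i j : Fin (n+3) ↦
    if DAdj n i j then 3 else if i = j then 1 else 2
  isSymm := by
    apply Matrix.IsSymm.ext
    intro i j
    simp only [Matrix.of_apply]
    by_cases h : DAdj n (i : ℕ) (j : ℕ)
    · rw [if_pos h, if_pos ((dAdj_symm n (i : ℕ) (j : ℕ)).mp h)]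
    · rw [if_neg h, if_neg (fun hh => h ((dAdj_symm n (j : ℕ) (i : ℕ)).mp hh))]
      by_cases h2 : (j : Fin (n+3)) = i
      · simp [h2]
      · rw [if_neg h2, if_neg (fun hh => h2 hh.symm)]
  diagonal i := by
    have : ¬ DAdj n (i : ℕ) (i : ℕ) := fun h => dAdj_ne n i i h rfl
    simp [this]
  off_diagonal i j h := by
    have h2 : (i : Fin (n+3)) ≠ j := h
    by_cases hA : DAdj n (i : ℕ) (j : ℕ) <;> simp [Matrix.of_apply, hA, h2]

/-- The generator `s_k` of type D̃_{n+2}, for `k ≤ n+2`. -/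
def dv (n k : ℕ) : Fin (n+3) := ⟨k % (n+3), Nat.mod_lt _ (Nat.succ_pos _)⟩



section Aux

variable [DecidableEq B]

lemma filter_commStep {i j : B} (hii : M i i ≠ 2) (hjj : M j j ≠ 2)
    (hij : M i j ≠ 2) (hji : M j i ≠ 2) {l l' : List B} (h : CommStep M l l') :
    l.filter (fun x => x = i ∨ x = j) = l'.filter (fun x => x = i ∨ x = j) := by
  obtain ⟨l₁, l₂, a, b, hab, rfl, rfl⟩ := h
  simp only [List.filter_append]
  congr 1
  by_cases pa : (a = i ∨ a = j)
  · by_cases pb : (b = i ∨ b = j)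
    · exfalso
      rcases pa with rfl | rfl <;> rcases pb with rfl | rfl <;> simp_all
    · simp [List.filter_cons, pa, pb]
  · simp [List.filter_cons, pa]

lemma filter_commEquiv {i j : B} (hii : M i i ≠ 2) (hjj : M j j ≠ 2)
    (hij : M i j ≠ 2) (hji : M j i ≠ 2) {l l' : List B} (h : CommEquiv M l l') :
    l.filter (fun x => x = i ∨ x = j) = l'.filter (fun x => x = i ∨ x = j) := by
  induction h with
  | refl => rfl
  | tail _ hstep ih => exact ih.trans (filter_commStep hii hjj hij hji hstep)

/-- If `w` is FC with left descents `s` and `s'`, and `t` is a left descent of `s * w`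
with `m(s',t) ≠ 2` (and `t ≠ s'`, `s ∉ {t, s'}`), we get a contradiction. -/
lemma key_lemma (cs : CoxeterSystem M W) {w : W} (hw : IsFC cs w) {s s' t : B}
    (hs : cs.IsLeftDescent w s) (hs' : cs.IsLeftDescent w s')
    (ht : cs.IsLeftDescent (cs.simple s * w) t)
    (h1 : M s' s' ≠ 2) (h2 : M t t ≠ 2) (h3 : M s' t ≠ 2) (h4 : M t s' ≠ 2)
    (hst : s ≠ t) (hss' : s ≠ s') (hts' : t ≠ s') : False := by
  have lsw : cs.length (cs.simple s * w) + 1 = cs.length w := by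
    rcases cs.length_simple_mul w s with h | h
    · exact absurd h (by have := hs; unfold CoxeterSystem.IsLeftDescent at this; omega)
    · exact h
  have ltlw : cs.length (cs.simple t * (cs.simple s * w)) + 1
      = cs.length (cs.simple s * w) := by
    rcases cs.length_simple_mul (cs.simple s * w) t with h | h
    · exact absurd h (by unfold CoxeterSystem.IsLeftDescent at ht; omega)
    · exact h
  have ls'w : cs.length (cs.simple s' * w) + 1 = cs.length w := by
    rcases cs.length_simple_mul w s' with h | h
    · exact absurd h (by unfold CoxeterSystem.IsLeftDescent at hs'; omega)
    · exact h
  obtain ⟨r, hrlen, hreq⟩ := cs.exists_reduced_word (cs.simple t * (cs.simple s * w))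
  obtain ⟨r', hrlen', hreq'⟩ := cs.exists_reduced_word (cs.simple s' * w)
  set A : List B := s :: t :: r with hA
  set Bw : List B := s' :: r' with hB
  have hπA : cs.wordProd A = w := by
    rw [hA, cs.wordProd_cons, cs.wordProd_cons, ← hreq,
      cs.simple_mul_simple_cancel_left, cs.simple_mul_simple_cancel_left]
  have hπB : cs.wordProd Bw = w := by
    rw [hB, cs.wordProd_cons, ← hreq', cs.simple_mul_simple_cancel_left]
  have hredA : cs.IsReduced A := by
    unfold CoxeterSystem.IsReduced
    rw [hπA, hA]
    simp only [List.length_cons, ← (show cs.length (cs.wordProd r) = r.length from hrlen), ← hreq]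
    omega
  have hredB : cs.IsReduced Bw := by
    unfold CoxeterSystem.IsReduced
    rw [hπB, hB]
    simp only [List.length_cons, ← (show cs.length (cs.wordProd r') = r'.length from hrlen'), ← hreq']
    omega
  have hce := hw A Bw hredA hredB hπA hπB
  have := filter_commEquiv (i := t) (j := s') h2 h1 h4 h3 hce
  rw [hA, hB] at this
  simp only [List.filter_cons] at this
  rw [if_neg (by simp [hst, hss']), if_pos (by simp), if_pos (by simp)] at this
  exact hts' (List.cons.injEq .. ▸ this).1

end Aux

lemma dMatrix_apply (n : ℕ) (i j : Fin (n+3)) :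
    DMatrix n i j = if DAdj n i j then 3 else if i = j then 1 else 2 := rfl

lemma dv_val (n k : ℕ) (hk : k < n + 3) : ((dv n k : Fin (n+3)) : ℕ) = k :=
  Nat.mod_eq_of_lt hk


theorem stmt9 (n : ℕ) (hn : 2 ≤ n) {W : Type*} [Group W]
    (cs : CoxeterSystem (DMatrix n) W) (w : W) (hw : IsFC cs w)
    (hD : {i | cs.IsLeftDescent w i} = {dv n 0, dv n 1}) :
    LeftStarIrreducible cs w := by
  intro s t hred
  obtain ⟨hBig, hs, ht⟩ := hred
  have hDiff : ∀ i : Fin (n+3), cs.IsLeftDescent w i ↔ (i = dv n 0 ∨ i = dv n 1) := by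
    intro i
    have := Set.ext_iff.mp hD i
    simpa using this
  have hs01 : s = dv n 0 ∨ s = dv n 1 := (hDiff s).mp hs
  have hv0 : ((dv n 0 : Fin (n+3)) : ℕ) = 0 := dv_val n 0 (by omega)
  have hv1 : ((dv n 1 : Fin (n+3)) : ℕ) = 1 := dv_val n 1 (by omega)
  have hsval : (s : ℕ) = 0 ∨ (s : ℕ) = 1 := by
    rcases hs01 with rfl | rfl
    · left; exact hv0
    · right; exact hv1
  -- from Big, the matrix entry must be 3, hence adjacency, hence t = s₂
  have hAdj : DAdj n s t := by
    by_contra hA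
    rw [Big, dMatrix_apply, if_neg hA] at hBig
    rcases hBig with h | h <;> split_ifs at h <;> omega
  have htval : (t : ℕ) = 2 := by
    unfold DAdj DHalf at hAdj
    omega
  -- the other descent s'
  set s' : Fin (n+3) := if s = dv n 0 then dv n 1 else dv n 0 with hs'def
  have hs'01 : s' = dv n 0 ∨ s' = dv n 1 := by
    rw [hs'def]; split_ifs <;> simp
  have hs' : cs.IsLeftDescent w s' := (hDiff s').mpr hs'01
  have hs'val : (s' : ℕ) = 0 ∨ (s' : ℕ) = 1 := by
    rcases hs'01 with h | h <;> rw [h]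
    · left; exact hv0
    · right; exact hv1
  have hne01 : dv n 0 ≠ dv n 1 := by
    intro h
    have := congrArg Fin.val h
    rw [hv0, hv1] at this
    omega
  have hss'val : (s : ℕ) ≠ (s' : ℕ) := by
    rcases hs01 with h0 | h0
    · rw [hs'def, if_pos h0, h0, hv0, hv1]; omega
    · have hne : s ≠ dv n 0 := by rw [h0]; exact hne01.symm
      rw [hs'def, if_neg hne, h0, hv0, hv1]; omega
  have hAdj' : DAdj n s' t := by
    left
    unfold DHalf
    rcases hs'val with h | h <;> omega
  have hAdj'2 : DAdj n t s' := (dAdj_symm n _ _).mpr hAdj'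
  have hnAdj_tt : ¬ DAdj n t t := fun h => dAdj_ne n _ _ h rfl
  have hnAdj_s's' : ¬ DAdj n s' s' := fun h => dAdj_ne n _ _ h rfl
  refine key_lemma cs hw hs hs' ht ?_ ?_ ?_ ?_ ?_ ?_ ?_
  · rw [dMatrix_apply, if_neg hnAdj_s's', if_pos rfl]; omega
  · rw [dMatrix_apply, if_neg hnAdj_tt, if_pos rfl]; omega
  · rw [dMatrix_apply, if_pos hAdj']; omega
  · rw [dMatrix_apply, if_pos hAdj'2]; omega
  · intro h; rw [h] at hsval; omega
  · intro h; exact hss'val (by rw [h])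
  · intro h; rw [h] at htval; rcases hs'val with h' | h' <;> omega


end CoxFC
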